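/- Let G be a connected chordal graph, let X be a minimal vertex set separating a vertex u from some vertex set, let W be a connected component of G − X all of whose vertices have a path to X avoiding other components (i.e., X = N(W) ∩ X with every vertex of X having a neighbor in W). Then there exists a vertex w in W adjacent to every vertex of X. -/

import Mathlib

open SimpleGraph

variable {V : Type*}

noncomputable instance (priority := low) instFintypeSubsetOfFinite [Finite V] (s : Set V) :
    Fintype ↥s := Fintype.ofFinite _

/-- Eccentricity of a vertex: max distance to any vertex. -/
noncomputable def ecc [Fintype V] (G : SimpleGraph V) (x : V) : ℕ :=
  Finset.univ.sup (G.dist x)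

/-- Radius: minimum eccentricity. -/
noncomputable def grad [Fintype V] (G : SimpleGraph V) : ℕ :=
  sInf (Set.range (ecc G))

/-- Diameter: maximum eccentricity. -/
noncomputable def gdiam [Fintype V] (G : SimpleGraph V) : ℕ :=
  Finset.univ.sup (ecc G)

/-- The center: vertices of minimum eccentricity. -/
def center [Fintype V] (G : SimpleGraph V) : Set V :=
  {x | ecc G x = grad G}

/-- `G` has an induced cycle of length `n`. -/
def HasInducedCycle (G : SimpleGraph V) (n : ℕ) : Prop :=
  3 ≤ n ∧ ∃ f : ZMod n → V, Function.Injective f ∧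
    ∀ i j : ZMod n, G.Adj (f i) (f j) ↔ (i = j + 1 ∨ j = i + 1)

/-- `G` is `k`-chordal: no induced cycle of length greater than `k`. -/
def KChordal (G : SimpleGraph V) (k : ℕ) : Prop :=
  ∀ n, k < n → ¬ HasInducedCycle G n

/-!
Take `w ∈ W` whose set of neighbours in `X` is maximal under inclusion, and suppose some `x ∈ X`
is not adjacent to `w`. Follow a shortest path of `G[W]` from `w` to a neighbour `b` of `x`; it is
chordless and only its end sees `x`. Every neighbour `z ∈ X` of `w` is adjacent to `b`: otherwise
`x`, `z`, the last vertex of the path adjacent to `z` and the rest of the path up to `b` form an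
induced cycle of length at least four. Hence `b` has strictly more neighbours in `X` than `w`.
-/

namespace SimpleGraph

variable {V' : Type*} {G : SimpleGraph V} {H : SimpleGraph V'} {f : ℕ → V} {n : ℕ}

structure IsChordlessPath (G : SimpleGraph V) (f : ℕ → V) (n : ℕ) : Prop where
  injOn : Set.InjOn f (Set.Iic n)
  adj_iff : ∀ i ≤ n, ∀ j ≤ n, G.Adj (f i) (f j) ↔ i = j + 1 ∨ j = i + 1

namespace IsChordlessPath

theorem map (hf : G.IsChordlessPath f n) (φ : G ↪g H) : H.IsChordlessPath (φ ∘ f) n where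
  injOn := φ.injective.comp_injOn hf.injOn
  adj_iff i hi j hj := φ.map_adj_iff.trans (hf.adj_iff i hi j hj)

theorem drop (hf : G.IsChordlessPath f n) {k : ℕ} (hk : k ≤ n) :
    G.IsChordlessPath (fun i => f (k + i)) (n - k) where
  injOn i hi j hj h := by
    have := hf.injOn (show k + i ≤ n by rw [Set.mem_Iic] at hi; omega)
      (show k + j ≤ n by rw [Set.mem_Iic] at hj; omega) h
    omega
  adj_iff i hi j hj := (hf.adj_iff _ (by omega) _ (by omega)).trans (by omega)

theorem cons (hf : G.IsChordlessPath f n) {y : V} (hy : ∀ i ≤ n, f i ≠ y)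
    (hadj : ∀ i ≤ n, G.Adj y (f i) ↔ i = 0) :
    G.IsChordlessPath (fun i => if i = 0 then y else f (i - 1)) (n + 1) where
  injOn i hi j hj h := by
    simp only [Set.mem_Iic] at hi hj
    rcases i with _ | i <;> rcases j with _ | j <;> simp only [↓reduceIte, add_tsub_cancel_right,
      Nat.add_one_ne_zero] at h
    · rfl
    · exact absurd h.symm (hy j (by omega))
    · exact absurd h (hy i (by omega))
    · rw [hf.injOn (show i ≤ n by omega) (show j ≤ n by omega) h]
  adj_iff i hi j hj := by
    rcases i with _ | i <;> rcases j with _ | j <;> simp only [↓reduceIte, add_tsub_cancel_right,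
      Nat.add_one_ne_zero]
    · simp
    · rw [hadj j (by omega)]; omega
    · rw [G.adj_comm, hadj i (by omega)]; omega
    · rw [hf.adj_iff i (by omega) j (by omega)]; omega

end IsChordlessPath

theorem Walk.dist_getVert_getVert {u v : V} (p : G.Walk u v) (hp : p.length = G.dist u v)
    {i j : ℕ} (hij : i ≤ j) (hj : j ≤ p.length) :
    G.dist (p.getVert i) (p.getVert j) = j - i := by
  have hsub : ((p.take j).drop i).IsSubwalk p := (isSubwalk_drop _ i).trans (p.isSubwalk_take j)
  have := length_eq_dist_of_subwalk hp hsub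
  rwa [Walk.drop_length, Walk.take_length, Walk.take_getVert, min_eq_left hj, min_eq_right hij,
    eq_comm] at this

theorem Walk.isChordlessPath_getVert {u v : V} (p : G.Walk u v) (hp : p.length = G.dist u v) :
    G.IsChordlessPath p.getVert p.length := by
  have hdist : ∀ i ≤ p.length, ∀ j ≤ p.length,
      G.dist (p.getVert i) (p.getVert j) = (j - i) + (i - j) := by
    intro i hi j hj
    rcases le_total i j with hij | hji
    · rw [p.dist_getVert_getVert hp hij hj]; omega
    · rw [dist_comm, p.dist_getVert_getVert hp hji hi]; omega
  refine ⟨fun i hi j hj h => ?_, fun i hi j hj => ?_⟩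
  · have := hdist i hi j hj
    rw [h, dist_self] at this
    omega
  · rw [← dist_eq_one_iff_adj, hdist i hi j hj]
    omega

theorem Connected.exists_isChordlessPath_to (hG : G.Connected) (a : V) {S : Set V}
    (hS : S.Nonempty) :
    ∃ (f : ℕ → V) (n : ℕ), G.IsChordlessPath f n ∧ f 0 = a ∧ f n ∈ S ∧ ∀ i < n, f i ∉ S := by
  obtain ⟨b, hbS, hbmin⟩ := exists_minimalFor_of_wellFoundedLT (· ∈ S) (G.dist a) hS
  obtain ⟨p, hp⟩ := hG.exists_walk_length_eq_dist a b
  refine ⟨p.getVert, p.length, p.isChordlessPath_getVert hp, p.getVert_zero,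
    p.getVert_length.symm ▸ hbS, fun i hi hiS => ?_⟩
  have hdi : G.dist a (p.getVert i) = i := by
    simpa using p.dist_getVert_getVert hp (Nat.zero_le i) hi.le
  have := hbmin hiS (by omega)
  omega

end SimpleGraph

open SimpleGraph

section

variable {G : SimpleGraph V} {f : ℕ → V} {n : ℕ}

theorem hasInducedCycle_of_adj_iff {N : ℕ} (hN : 3 ≤ N) {g : ℕ → V}
    (hinj : Set.InjOn g (Set.Iio N))
    (hadj : ∀ i < N, ∀ j < N, G.Adj (g i) (g j) ↔ i = (j + 1) % N ∨ j = (i + 1) % N) :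
    HasInducedCycle G N := by
  have : NeZero N := ⟨by omega⟩
  have : Fact (1 < N) := ⟨by omega⟩
  have hval : ∀ a b : ZMod N, a = b + 1 ↔ a.val = (b.val + 1) % N := fun a b => by
    rw [← (ZMod.val_injective N).eq_iff, ZMod.val_add, ZMod.val_one]
  refine ⟨hN, fun k => g k.val, fun a b h => ZMod.val_injective N ?_, fun a b => ?_⟩
  · exact hinj (ZMod.val_lt a) (ZMod.val_lt b) h
  · rw [hval, hval]
    exact hadj _ (ZMod.val_lt a) _ (ZMod.val_lt b)

theorem SimpleGraph.IsChordlessPath.hasInducedCycle (hf : G.IsChordlessPath f n) (hn : 2 ≤ n)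
    {y : V} (hy : ∀ i ≤ n, f i ≠ y) (hadj : ∀ i ≤ n, G.Adj y (f i) ↔ i = 0 ∨ i = n) :
    HasInducedCycle G (n + 2) := by
  have hmod : ∀ i ≤ n + 1, (i + 1) % (n + 2) = if i = n + 1 then 0 else i + 1 := fun i hi => by
    split_ifs with h
    · rw [h, Nat.mod_self]
    · exact Nat.mod_eq_of_lt (by omega)
  refine hasInducedCycle_of_adj_iff (g := fun i => if i = n + 1 then y else f i) (by omega)
    (fun i hi j hj h => ?_) (fun i hi j hj => ?_)
  · simp only [Set.mem_Iio] at hi hj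
    by_cases hi' : i = n + 1 <;> by_cases hj' : j = n + 1 <;> simp only [hi', hj', ↓reduceIte] at h
    · omega
    · exact absurd h.symm (hy j (by omega))
    · exact absurd h (hy i (by omega))
    · exact hf.injOn (show i ≤ n by omega) (show j ≤ n by omega) h
  · rw [hmod i (by omega), hmod j (by omega)]
    by_cases hi' : i = n + 1 <;> by_cases hj' : j = n + 1 <;> simp only [hi', hj', ↓reduceIte]
    · simp
    · rw [hadj j (by omega)]; omega
    · rw [G.adj_comm, hadj i (by omega)]; omega
    · exact hf.adj_iff i (by omega) j (by omega)

theorem KChordal.length_le_one_of_isChordlessPath (hch : KChordal G 3)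
    (hf : G.IsChordlessPath f n) {y : V} (hy : ∀ i ≤ n, f i ≠ y)
    (hadj : ∀ i ≤ n, G.Adj y (f i) ↔ i = 0 ∨ i = n) : n ≤ 1 := by
  by_contra! hn
  exact hch (n + 2) (by omega) (hf.hasInducedCycle hn hy hadj)

theorem KChordal.adj_of_isChordlessPath (hch : KChordal G 3) (hf : G.IsChordlessPath f n)
    {x z : V} (hxz : G.Adj x z) (hx : ∀ i ≤ n, f i ≠ x) (hz : ∀ i ≤ n, f i ≠ z)
    (hz0 : G.Adj z (f 0)) (hxn : G.Adj x (f n)) (hxi : ∀ i < n, ¬ G.Adj x (f i)) :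
    G.Adj z (f n) := by
  classical
  set j := Nat.findGreatest (fun i => G.Adj z (f i)) n
  have hjn : j ≤ n := Nat.findGreatest_le n
  have hzj : G.Adj z (f j) := Nat.findGreatest_spec (P := fun i => G.Adj z (f i)) n.zero_le hz0
  have hz_after : ∀ i, j < i → i ≤ n → ¬ G.Adj z (f i) := fun i => Nat.findGreatest_is_greatest
  have hpath := (hf.drop hjn).cons (y := z) (fun i hi => hz _ (by omega)) fun i hi => by
    rcases i.eq_zero_or_pos with rfl | hi0
    · simpa using hzj
    · simpa [hi0.ne'] using hz_after (j + i) (by omega) (by omega)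
  have := hch.length_le_one_of_isChordlessPath hpath (y := x) (fun i hi => ?_) fun i hi => ?_
  · rw [show n = j by omega]
    exact hzj
  · rcases i with _ | i
    · exact hxz.ne'
    · simpa using hx (j + i) (by omega)
  · rcases i with _ | i
    · simpa using hxz
    · simp only [Nat.add_one_ne_zero, ↓reduceIte, add_tsub_cancel_right, false_or]
      refine ⟨fun h => ?_, fun h => ?_⟩
      · by_contra
        exact hxi (j + i) (by omega) h
      · rwa [show j + i = n by omega]

end

theorem exists_vertex_dominating_separator_general [Fintype V] (G : SimpleGraph V)
    (hch : KChordal G 3) (X W : Set V) (hX : G.IsClique X)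
    (hWX : Disjoint W X) (hWne : W.Nonempty) (hWconn : (G.induce W).Connected)
    (hN : ∀ x ∈ X, ∃ w ∈ W, G.Adj x w) :
    ∃ w ∈ W, ∀ x ∈ X, G.Adj w x := by
  obtain ⟨w, hwW, hwmax⟩ := W.toFinite.exists_maximalFor (fun w => {z ∈ X | G.Adj w z}) W hWne
  refine ⟨w, hwW, fun x hx => ?_⟩
  by_contra hwx
  obtain ⟨b, hbW, hxb⟩ := hN x hx
  obtain ⟨f, n, hf, hf0, hfn, hfS⟩ := hWconn.exists_isChordlessPath_to ⟨w, hwW⟩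
    (S := {b | G.Adj x b}) ⟨⟨b, hbW⟩, hxb⟩
  have hoff : ∀ y ∈ X, ∀ i ≤ n, (f i : V) ≠ y := fun y hy i _ h =>
    Set.disjoint_left.mp hWX (h ▸ (f i).2) hy
  have hdom : {z ∈ X | G.Adj w z} ⊆ {z ∈ X | G.Adj (f n) z} := fun z ⟨hz, hwz⟩ =>
    ⟨hz, (hch.adj_of_isChordlessPath (hf.map (Embedding.induce W))
      (hX hx hz (by rintro rfl; exact hwx hwz)) (hoff x hx) (hoff z hz)
      (by simpa [hf0] using hwz.symm) hfn hfS).symm⟩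
  exact hwx (hwmax (f n).2 hdom ⟨hx, hfn.symm⟩).2

theorem exists_vertex_dominating_separator [Fintype V] (G : SimpleGraph V)
    (hG : G.Connected) (hch : KChordal G 3) (X W : Set V) (hX : G.IsClique X)
    (hWX : Disjoint W X) (hWne : W.Nonempty) (hWconn : (G.induce W).Connected)
    (hWcomp : ∀ w ∈ W, ∀ v, v ∉ X → G.Adj w v → v ∈ W)
    (hN : ∀ x ∈ X, ∃ w ∈ W, G.Adj x w) :
    ∃ w ∈ W, ∀ x ∈ X, G.Adj w x :=
  exists_vertex_dominating_separator_general G hch X W hX hWX hWne hWconn hN
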